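/- Explicit lower bound via the seven witness metrics: let d^a,...,d^g be the seven shortest-path pseudometrics on C ∪ F for the instance I* (block graphs as in the paper, with scales M_a = 0.014507, M_b = 0.020955, M_c = 0.038866, M_d = 0.051820, M_e = 0.013433, M_f = 0.019343, M_g = 0.025791). Then for every probability distribution q on F there exists o ∈ F such that Σ_{i∈F} q(i) · Σ_{j∈C} d^o(i,j) ≥ 2.063 · min_{o'∈F} Σ_{j∈C} d^o(o',j), and min_{o'∈F} Σ_{j∈C} d^o(o',j) > 0. Hence for every distribution q, sup_{d ◁ σ*, OPT(d)>0} cost_d(q)/OPT(d) ≥ 2.063. -/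
import Mathlib


/-- Points of the instance: `Sum.inl j` is client `j`, `Sum.inr i` is facility `i`. -/
abbrev Pt := Fin 7 ⊕ Fin 7

/-- `d` is a pseudometric: nonnegative, symmetric, zero on the diagonal,
and satisfying the triangle inequality `d x y ≤ d x z + d y z`. -/
def IsPseudometric (d : Pt → Pt → ℝ) : Prop :=
  (∀ x y, 0 ≤ d x y) ∧ (∀ x y, d x y = d y x) ∧ (∀ x, d x x = 0) ∧
    (∀ x y z, d x y ≤ d x z + d y z)

/-- Rank function of the instance `I*` (facilities `a,…,g` are `0,…,6`):
clients 1,2,3 rank c ≻ e ≻ b ≻ a ≻ f ≻ g ≻ d, clients 4,5,6 rank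
d ≻ g ≻ f ≻ a ≻ e ≻ b ≻ c, client 7 ranks b ≻ a ≻ f ≻ g ≻ e ≻ c ≻ d. -/
def rkStar (j : Fin 7) : Fin 7 → ℕ :=
  if j.val ≤ 2 then ![3, 2, 0, 6, 1, 4, 5]
  else if j.val ≤ 5 then ![3, 5, 6, 0, 4, 2, 1]
  else ![1, 0, 5, 6, 4, 2, 3]

/-- The preference profile `σ*` of the instance `I*`: `a ≽_j b` iff `a` has
(weakly) smaller rank than `b` in client `j`'s list. -/
def sigmaStar (j : Fin 7) (a b : Fin 7) : Prop := rkStar j a ≤ rkStar j b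

/-- `d` is consistent with the profile `σ`: whenever client `j` prefers `a` to `b`,
facility `a` is at least as close to `j` as `b`. -/
def Consistent (d : Pt → Pt → ℝ) (σ : Fin 7 → Fin 7 → Fin 7 → Prop) : Prop :=
  ∀ j a b, σ j a b → d (Sum.inr a) (Sum.inl j) ≤ d (Sum.inr b) (Sum.inl j)

/-- Expected social cost of the distribution `q` under metric `d`. -/
def cost (d : Pt → Pt → ℝ) (q : Fin 7 → ℝ) : ℝ :=
  ∑ i, q i * ∑ j, d (Sum.inr i) (Sum.inl j)

/-- Total cost of the clients if facility `o` is chosen. -/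
def facCost (d : Pt → Pt → ℝ) (o : Fin 7) : ℝ :=
  ∑ j, d (Sum.inr o) (Sum.inl j)

/-- Optimal (minimum) total cost over all facilities. -/
noncomputable def OPT (d : Pt → Pt → ℝ) : ℝ :=
  Finset.univ.inf' Finset.univ_nonempty (facCost d)

/-- The block graph for `d^a`: vertices are the blocks
`0 = B1 = {1,2,3}`, `1 = B2 = {4,5,6}`, `2 = {7}`, `3 = {a}`, `4 = {b}`,
`5 = {c,e}`, `6 = {d,f,g}`, with edges B1–a, B1–b, B1–{c,e}, B2–{d,f,g},
B2–a, 7–a, 7–b. -/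
def graphA : SimpleGraph (Fin 7) :=
  SimpleGraph.fromRel (fun u v =>
    (u, v) ∈ ([(0, 3), (0, 4), (0, 5), (1, 6), (1, 3), (2, 3), (2, 4)] :
      List (Fin 7 × Fin 7)))

/-- The block of each point (clients 1,2,3 ↦ B1, clients 4,5,6 ↦ B2,
client 7 ↦ {7}; facilities a ↦ {a}, b ↦ {b}, c,e ↦ {c,e}, d,f,g ↦ {d,f,g}). -/
def blkA : Pt → Fin 7
  | Sum.inl j => if j.val ≤ 2 then 0 else if j.val ≤ 5 then 1 else 2
  | Sum.inr i => ![3, 4, 5, 6, 5, 6, 6] i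

/-- `d^a` is `M_a = 0.014507` times the graph distance between the blocks of the
two points (points in the same block are at distance 0). -/
noncomputable def dA : Pt → Pt → ℝ :=
  fun x y => 0.014507 * (graphA.dist (blkA x) (blkA y) : ℝ)


/-- The block graph for `d^b`: vertices are the blocks
`0 = B1 = {1,2,3}`, `1 = B2 = {4,5,6}`, `2 = {b,7}`, `3 = {e}`, `4 = {c}`,
`5 = {a,d,f,g}`, with edges B1–{b,7}, B1–e, B1–c, B2–{a,d,f,g}, B2–{b,7}, B2–e. -/
def graphB : SimpleGraph (Fin 6) :=
  SimpleGraph.fromRel (fun u v =>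
    (u, v) ∈ ([(0, 2), (0, 3), (0, 4), (1, 5), (1, 2), (1, 3)] :
      List (Fin 6 × Fin 6)))

/-- The block of each point (clients 1,2,3 ↦ B1, clients 4,5,6 ↦ B2,
client 7 ↦ {b,7}; facilities b ↦ {b,7}, e ↦ {e}, c ↦ {c}, a,d,f,g ↦ {a,d,f,g}). -/
def blkB : Pt → Fin 6
  | Sum.inl j => if j.val ≤ 2 then 0 else if j.val ≤ 5 then 1 else 2
  | Sum.inr i => ![5, 2, 4, 5, 3, 5, 5] i

/-- `d^b` is `M_b = 0.020955` times the graph distance between the blocks of the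
two points (points in the same block are at distance 0). -/
noncomputable def dB : Pt → Pt → ℝ :=
  fun x y => 0.020955 * (graphB.dist (blkB x) (blkB y) : ℝ)


/-- The block graph for `d^c`: vertices are the blocks
`0 = B2 = {4,5,6}`, `1 = {c,1,2,3}`, `2 = {d}`, `3 = {a,b,e,f,g}`, `4 = {7}`,
with edges B2–d, B2–{c,1,2,3}, B2–{a,b,e,f,g}, 7–{c,1,2,3}, 7–{a,b,e,f,g}. -/
def graphC : SimpleGraph (Fin 5) :=
  SimpleGraph.fromRel (fun u v =>
    (u, v) ∈ ([(0, 2), (0, 1), (0, 3), (4, 1), (4, 3)] :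
      List (Fin 5 × Fin 5)))

/-- The block of each point (clients 1,2,3 ↦ {c,1,2,3}, clients 4,5,6 ↦ B2,
client 7 ↦ {7}; facility c ↦ {c,1,2,3}, d ↦ {d}, a,b,e,f,g ↦ {a,b,e,f,g}). -/
def blkC : Pt → Fin 5
  | Sum.inl j => if j.val ≤ 2 then 1 else if j.val ≤ 5 then 0 else 4
  | Sum.inr i => ![3, 3, 1, 2, 3, 3, 3] i

/-- `d^c` is `M_c = 0.038866` times the graph distance between the blocks of the
two points (points in the same block are at distance 0). -/
noncomputable def dC : Pt → Pt → ℝ :=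
  fun x y => 0.038866 * (graphC.dist (blkC x) (blkC y) : ℝ)


/-- The block graph for `d^d`: vertices are the blocks
`0 = {7}`, `1 = B1 = {1,2,3}`, `2 = {d,4,5,6}`, `3 = {a,b,c,e,f,g}`,
with edges 7–B1, B1–{d,4,5,6}, B1–{a,b,c,e,f,g}, {d,4,5,6}–7, {a,b,c,e,f,g}–7. -/
def graphD : SimpleGraph (Fin 4) :=
  SimpleGraph.fromRel (fun u v =>
    (u, v) ∈ ([(0, 1), (1, 2), (1, 3), (2, 0), (3, 0)] :
      List (Fin 4 × Fin 4)))

/-- The block of each point (clients 1,2,3 ↦ B1, clients 4,5,6 ↦ {d,4,5,6},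
client 7 ↦ {7}; facility d ↦ {d,4,5,6}, all other facilities ↦ {a,b,c,e,f,g}). -/
def blkD : Pt → Fin 4
  | Sum.inl j => if j.val ≤ 2 then 1 else if j.val ≤ 5 then 2 else 0
  | Sum.inr i => ![3, 3, 3, 2, 3, 3, 3] i

/-- `d^d` is `M_d = 0.051820` times the graph distance between the blocks of the
two points (points in the same block are at distance 0). -/
noncomputable def dD : Pt → Pt → ℝ :=
  fun x y => 0.051820 * (graphD.dist (blkD x) (blkD y) : ℝ)


/-- The block graph for `d^e`: vertices are the blocks
`0 = {d}`, `1 = B2 = {4,5,6}`, `2 = {a,f,g}`, `3 = {e}`, `4 = {7}`, `5 = {b}`,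
`6 = B1 = {1,2,3}`, `7 = {c}`, with edges d–B2, B2–{a,f,g}, B2–e, {a,f,g}–7,
7–b, 7–e, B1–e, B1–c. -/
def graphE : SimpleGraph (Fin 8) :=
  SimpleGraph.fromRel (fun u v =>
    (u, v) ∈ ([(0, 1), (1, 2), (1, 3), (2, 4), (4, 5), (4, 3), (6, 3), (6, 7)] :
      List (Fin 8 × Fin 8)))

/-- The block of each point (clients 1,2,3 ↦ B1, clients 4,5,6 ↦ B2,
client 7 ↦ {7}; facilities a,f,g ↦ {a,f,g}, b ↦ {b}, c ↦ {c}, d ↦ {d}, e ↦ {e}). -/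
def blkE : Pt → Fin 8
  | Sum.inl j => if j.val ≤ 2 then 6 else if j.val ≤ 5 then 1 else 4
  | Sum.inr i => ![2, 5, 7, 0, 3, 2, 2] i

/-- `d^e` is `M_e = 0.013433` times the graph distance between the blocks of the
two points (points in the same block are at distance 0). -/
noncomputable def dE : Pt → Pt → ℝ :=
  fun x y => 0.013433 * (graphE.dist (blkE x) (blkE y) : ℝ)


/-- The block graph for `d^f`, with the two weight-`2·M_f` edges subdivided by the
auxiliary vertices `7` and `8` (so that `M_f` times the unweighted graph distance
between blocks equals the weighted shortest-path distance of the paper).  Vertices: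
`0 = {c,e}`, `1 = {a,b}`, `2 = {d,g}`, `3 = {f}`, `4 = B1 = {1,2,3}`,
`5 = B2 = {4,5,6}`, `6 = {7}`; edges of weight `M_f`: f–B1, {c,e}–B1, {a,b}–B1,
B2–{d,g}, B2–f, {a,b}–7, 7–f; edges of weight `2·M_f` (subdivided through the
auxiliary vertices): {c,e}–{d,g} and {a,b}–{d,g}. -/
def graphF : SimpleGraph (Fin 9) :=
  SimpleGraph.fromRel (fun u v =>
    (u, v) ∈ ([(3, 4), (0, 4), (1, 4), (5, 2), (5, 3), (1, 6), (6, 3),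
      (0, 7), (7, 2), (1, 8), (8, 2)] : List (Fin 9 × Fin 9)))

/-- The block of each point (clients 1,2,3 ↦ B1, clients 4,5,6 ↦ B2,
client 7 ↦ {7}; facilities a,b ↦ {a,b}, c,e ↦ {c,e}, d,g ↦ {d,g}, f ↦ {f}). -/
def blkF : Pt → Fin 9
  | Sum.inl j => if j.val ≤ 2 then 4 else if j.val ≤ 5 then 5 else 6
  | Sum.inr i => ![1, 1, 0, 2, 0, 3, 2] i

/-- `d^f` is `M_f = 0.019343` times the graph distance between the blocks of the
two points in the subdivided block graph, i.e. the weighted shortest-path distance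
between the blocks (points in the same block are at distance 0). -/
noncomputable def dF : Pt → Pt → ℝ :=
  fun x y => 0.019343 * (graphF.dist (blkF x) (blkF y) : ℝ)


/-- The block graph for `d^g`, with the two weight-`2·M_g` edges subdivided by the
auxiliary vertices `7` and `8` (so that `M_g` times the unweighted graph distance
between blocks equals the weighted shortest-path distance of the paper).  Vertices:
`0 = {d}`, `1 = {a,b,f}`, `2 = {c,e}`, `3 = B2 = {4,5,6}`, `4 = {7}`, `5 = {g}`,
`6 = B1 = {1,2,3}`; edges of weight `M_g`: d–B2, g–B2, g–7, {a,b,f}–7, {a,b,f}–B1,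
g–B1, {c,e}–B1; edges of weight `2·M_g` (subdivided through the auxiliary
vertices): d–{a,b,f} and d–{c,e}. -/
def graphG : SimpleGraph (Fin 9) :=
  SimpleGraph.fromRel (fun u v =>
    (u, v) ∈ ([(0, 3), (5, 3), (5, 4), (1, 4), (1, 6), (5, 6), (2, 6),
      (0, 7), (7, 1), (0, 8), (8, 2)] : List (Fin 9 × Fin 9)))

/-- The block of each point (clients 1,2,3 ↦ B1, clients 4,5,6 ↦ B2,
client 7 ↦ {7}; facilities a,b,f ↦ {a,b,f}, c,e ↦ {c,e}, d ↦ {d}, g ↦ {g}). -/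
def blkG : Pt → Fin 9
  | Sum.inl j => if j.val ≤ 2 then 6 else if j.val ≤ 5 then 3 else 4
  | Sum.inr i => ![1, 1, 2, 0, 2, 1, 5] i

/-- `d^g` is `M_g = 0.025791` times the graph distance between the blocks of the
two points in the subdivided block graph, i.e. the weighted shortest-path distance
between the blocks (points in the same block are at distance 0). -/
noncomputable def dG : Pt → Pt → ℝ :=
  fun x y => 0.025791 * (graphG.dist (blkG x) (blkG y) : ℝ)

/-- The family of the seven witness metrics, indexed by the facilities
`a,…,g = 0,…,6`. -/
noncomputable def D : Fin 7 → Pt → Pt → ℝ := ![dA, dB, dC, dD, dE, dF, dG]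


section DistEq
variable {V : Type*} {G : SimpleGraph V} {f : V → V → ℕ}

private lemma walk_of_mat (h0 : ∀ v : V, f v v = 0)
    (h0' : ∀ u v : V, f u v = 0 → u = v)
    (hstep : ∀ u v : V, u ≠ v → ∃ w, G.Adj w v ∧ f u w + 1 = f u v) :
    ∀ (n : ℕ) (u v : V), f u v ≤ n → ∃ p : G.Walk u v, p.length = f u v := by
  intro n
  induction n with
  | zero =>
    intro u v h
    obtain rfl := h0' u v (Nat.le_zero.mp h)
    exact ⟨.nil, by simp [h0 u]⟩
  | succ n ih =>
    intro u v h
    by_cases huv : u = v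
    · subst huv; exact ⟨.nil, by simp [h0 u]⟩
    · obtain ⟨w, haw, hw⟩ := hstep u v huv
      obtain ⟨p, hp⟩ := ih u w (by omega)
      exact ⟨p.concat haw, by simp [SimpleGraph.Walk.length_concat, hp]; omega⟩

private lemma dist_eq_mat (h0 : ∀ v : V, f v v = 0)
    (h0' : ∀ u v : V, f u v = 0 → u = v)
    (hstep : ∀ u v : V, u ≠ v → ∃ w, G.Adj w v ∧ f u w + 1 = f u v)
    (hpot : ∀ u v w : V, G.Adj v w → f u w ≤ f u v + 1) :
    ∀ u v, G.dist u v = f u v := by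
  intro u v
  obtain ⟨p, hp⟩ := walk_of_mat h0 h0' hstep (f u v) u v le_rfl
  have hub : G.dist u v ≤ f u v := hp ▸ SimpleGraph.dist_le p
  have key : ∀ (x z : V) (p : G.Walk x z), f u z ≤ f u x + p.length := by
    intro x z p
    induction p with
    | nil => simp
    | @cons a b c hadj r ih =>
      have h := hpot u a b hadj
      simp only [SimpleGraph.Walk.length_cons]
      omega
  obtain ⟨p', hp'⟩ := SimpleGraph.Reachable.exists_walk_length_eq_dist ⟨p⟩
  have hlb := key u v p'
  rw [h0 u, hp'] at hlb
  omega

end DistEq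

def matA : Fin 7 → Fin 7 → ℕ := ![![0, 2, 2, 1, 1, 1, 3], ![2, 0, 2, 1, 3, 3, 1], ![2, 2, 0, 1, 1, 3, 3], ![1, 1, 1, 0, 2, 2, 2], ![1, 3, 1, 2, 0, 2, 4], ![1, 3, 3, 2, 2, 0, 4], ![3, 1, 3, 2, 4, 4, 0]]

instance : DecidableRel graphA.Adj :=
  fun a b => decidable_of_iff _ (SimpleGraph.fromRel_adj _ a b).symm

lemma distA_eq : ∀ u v, graphA.dist u v = matA u v :=
  dist_eq_mat (by decide) (by decide) (by decide) (by decide)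

lemma fcA (i : Fin 7) : facCost (D 0) i =
    0.014507 * ((∑ j, matA (blkA (Sum.inr i)) (blkA (Sum.inl j)) : ℕ) : ℝ) := by
  rw [show facCost (D 0) i = ∑ j, dA (Sum.inr i) (Sum.inl j) from rfl]
  simp only [dA, distA_eq]
  rw [Nat.cast_sum, Finset.mul_sum]

lemma posA : 0 < OPT (D 0) := by
  have h : ∀ i : Fin 7, 1 ≤ (∑ j, matA (blkA (Sum.inr i)) (blkA (Sum.inl j))) := by decide
  unfold OPT
  rw [Finset.lt_inf'_iff]
  intro i _
  rw [fcA i]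
  have h1 : (1:ℝ) ≤ ((∑ j, matA (blkA (Sum.inr i)) (blkA (Sum.inl j)) : ℕ) : ℝ) := by
    exact_mod_cast h i
  linarith

lemma optleA : OPT (D 0) ≤ 0.014507 * 7 := by
  have h := Finset.inf'_le (facCost (D 0)) (Finset.mem_univ (0 : Fin 7))
  rw [fcA 0, show (∑ j, matA (blkA (Sum.inr 0)) (blkA (Sum.inl j))) = 7 from by decide] at h
  exact_mod_cast h

lemma costA (q : Fin 7 → ℝ) : cost (D 0) q = q 0 * (0.014507 * 7) + q 1 * (0.014507 * 13) + q 2 * (0.014507 * 15) + q 3 * (0.014507 * 15) + q 4 * (0.014507 * 15) + q 5 * (0.014507 * 15) + q 6 * (0.014507 * 15) := by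
  rw [show cost (D 0) q = ∑ i, q i * facCost (D 0) i from rfl, Fin.sum_univ_seven]
  rw [fcA 0, fcA 1, fcA 2, fcA 3, fcA 4, fcA 5, fcA 6]
  rw [show (∑ j, matA (blkA (Sum.inr (0:Fin 7))) (blkA (Sum.inl j))) = 7 from by decide, show (∑ j, matA (blkA (Sum.inr (1:Fin 7))) (blkA (Sum.inl j))) = 13 from by decide, show (∑ j, matA (blkA (Sum.inr (2:Fin 7))) (blkA (Sum.inl j))) = 15 from by decide, show (∑ j, matA (blkA (Sum.inr (3:Fin 7))) (blkA (Sum.inl j))) = 15 from by decide, show (∑ j, matA (blkA (Sum.inr (4:Fin 7))) (blkA (Sum.inl j))) = 15 from by decide, show (∑ j, matA (blkA (Sum.inr (5:Fin 7))) (blkA (Sum.inl j))) = 15 from by decide, show (∑ j, matA (blkA (Sum.inr (6:Fin 7))) (blkA (Sum.inl j))) = 15 from by decide]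
  push_cast
  ring

lemma pmA : IsPseudometric dA := by
  have hsymm : ∀ u v, matA u v = matA v u := by decide
  have hdiag : ∀ v, matA v v = 0 := by decide
  have htri : ∀ a b c, matA a b ≤ matA a c + matA b c := by decide
  refine ⟨fun x y => ?_, fun x y => ?_, fun x => ?_, fun x y z => ?_⟩
  · simp only [dA, distA_eq]; positivity
  · simp only [dA, distA_eq]; rw [hsymm]
  · simp only [dA, distA_eq, hdiag]; norm_num
  · simp only [dA, distA_eq]
    have h := htri (blkA x) (blkA y) (blkA z)
    have h2 : ((matA (blkA x) (blkA y) : ℕ) : ℝ) ≤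
        ((matA (blkA x) (blkA z) : ℕ) : ℝ) + ((matA (blkA y) (blkA z) : ℕ) : ℝ) := by
      exact_mod_cast h
    linarith

lemma consA : Consistent dA sigmaStar := by
  have key : ∀ j a b : Fin 7, rkStar j a ≤ rkStar j b →
      matA (blkA (Sum.inr a)) (blkA (Sum.inl j)) ≤
        matA (blkA (Sum.inr b)) (blkA (Sum.inl j)) := by decide
  intro j a b h
  simp only [dA, distA_eq]
  have h2 : ((matA (blkA (Sum.inr a)) (blkA (Sum.inl j)) : ℕ) : ℝ) ≤
      ((matA (blkA (Sum.inr b)) (blkA (Sum.inl j)) : ℕ) : ℝ) :=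
    Nat.cast_le.mpr (key j a b h)
  linarith

def matB : Fin 6 → Fin 6 → ℕ := ![![0, 2, 1, 1, 1, 3], ![2, 0, 1, 1, 3, 1], ![1, 1, 0, 2, 2, 2], ![1, 1, 2, 0, 2, 2], ![1, 3, 2, 2, 0, 4], ![3, 1, 2, 2, 4, 0]]

instance : DecidableRel graphB.Adj :=
  fun a b => decidable_of_iff _ (SimpleGraph.fromRel_adj _ a b).symm

lemma distB_eq : ∀ u v, graphB.dist u v = matB u v :=
  dist_eq_mat (by decide) (by decide) (by decide) (by decide)

lemma fcB (i : Fin 7) : facCost (D 1) i =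
    0.020955 * ((∑ j, matB (blkB (Sum.inr i)) (blkB (Sum.inl j)) : ℕ) : ℝ) := by
  rw [show facCost (D 1) i = ∑ j, dB (Sum.inr i) (Sum.inl j) from rfl]
  simp only [dB, distB_eq]
  rw [Nat.cast_sum, Finset.mul_sum]

lemma posB : 0 < OPT (D 1) := by
  have h : ∀ i : Fin 7, 1 ≤ (∑ j, matB (blkB (Sum.inr i)) (blkB (Sum.inl j))) := by decide
  unfold OPT
  rw [Finset.lt_inf'_iff]
  intro i _
  rw [fcB i]
  have h1 : (1:ℝ) ≤ ((∑ j, matB (blkB (Sum.inr i)) (blkB (Sum.inl j)) : ℕ) : ℝ) := by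
    exact_mod_cast h i
  linarith

lemma optleB : OPT (D 1) ≤ 0.020955 * 6 := by
  have h := Finset.inf'_le (facCost (D 1)) (Finset.mem_univ (1 : Fin 7))
  rw [fcB 1, show (∑ j, matB (blkB (Sum.inr 1)) (blkB (Sum.inl j))) = 6 from by decide] at h
  exact_mod_cast h

lemma costB (q : Fin 7 → ℝ) : cost (D 1) q = q 0 * (0.020955 * 14) + q 1 * (0.020955 * 6) + q 2 * (0.020955 * 14) + q 3 * (0.020955 * 14) + q 4 * (0.020955 * 8) + q 5 * (0.020955 * 14) + q 6 * (0.020955 * 14) := by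
  rw [show cost (D 1) q = ∑ i, q i * facCost (D 1) i from rfl, Fin.sum_univ_seven]
  rw [fcB 0, fcB 1, fcB 2, fcB 3, fcB 4, fcB 5, fcB 6]
  rw [show (∑ j, matB (blkB (Sum.inr (0:Fin 7))) (blkB (Sum.inl j))) = 14 from by decide, show (∑ j, matB (blkB (Sum.inr (1:Fin 7))) (blkB (Sum.inl j))) = 6 from by decide, show (∑ j, matB (blkB (Sum.inr (2:Fin 7))) (blkB (Sum.inl j))) = 14 from by decide, show (∑ j, matB (blkB (Sum.inr (3:Fin 7))) (blkB (Sum.inl j))) = 14 from by decide, show (∑ j, matB (blkB (Sum.inr (4:Fin 7))) (blkB (Sum.inl j))) = 8 from by decide, show (∑ j, matB (blkB (Sum.inr (5:Fin 7))) (blkB (Sum.inl j))) = 14 from by decide, show (∑ j, matB (blkB (Sum.inr (6:Fin 7))) (blkB (Sum.inl j))) = 14 from by decide]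
  push_cast
  ring

lemma pmB : IsPseudometric dB := by
  have hsymm : ∀ u v, matB u v = matB v u := by decide
  have hdiag : ∀ v, matB v v = 0 := by decide
  have htri : ∀ a b c, matB a b ≤ matB a c + matB b c := by decide
  refine ⟨fun x y => ?_, fun x y => ?_, fun x => ?_, fun x y z => ?_⟩
  · simp only [dB, distB_eq]; positivity
  · simp only [dB, distB_eq]; rw [hsymm]
  · simp only [dB, distB_eq, hdiag]; norm_num
  · simp only [dB, distB_eq]
    have h := htri (blkB x) (blkB y) (blkB z)
    have h2 : ((matB (blkB x) (blkB y) : ℕ) : ℝ) ≤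
        ((matB (blkB x) (blkB z) : ℕ) : ℝ) + ((matB (blkB y) (blkB z) : ℕ) : ℝ) := by
      exact_mod_cast h
    linarith

lemma consB : Consistent dB sigmaStar := by
  have key : ∀ j a b : Fin 7, rkStar j a ≤ rkStar j b →
      matB (blkB (Sum.inr a)) (blkB (Sum.inl j)) ≤
        matB (blkB (Sum.inr b)) (blkB (Sum.inl j)) := by decide
  intro j a b h
  simp only [dB, distB_eq]
  have h2 : ((matB (blkB (Sum.inr a)) (blkB (Sum.inl j)) : ℕ) : ℝ) ≤
      ((matB (blkB (Sum.inr b)) (blkB (Sum.inl j)) : ℕ) : ℝ) :=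
    Nat.cast_le.mpr (key j a b h)
  linarith

def matC : Fin 5 → Fin 5 → ℕ := ![![0, 1, 1, 1, 2], ![1, 0, 2, 2, 1], ![1, 2, 0, 2, 3], ![1, 2, 2, 0, 1], ![2, 1, 3, 1, 0]]

instance : DecidableRel graphC.Adj :=
  fun a b => decidable_of_iff _ (SimpleGraph.fromRel_adj _ a b).symm

lemma distC_eq : ∀ u v, graphC.dist u v = matC u v :=
  dist_eq_mat (by decide) (by decide) (by decide) (by decide)

lemma fcC (i : Fin 7) : facCost (D 2) i =
    0.038866 * ((∑ j, matC (blkC (Sum.inr i)) (blkC (Sum.inl j)) : ℕ) : ℝ) := by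
  rw [show facCost (D 2) i = ∑ j, dC (Sum.inr i) (Sum.inl j) from rfl]
  simp only [dC, distC_eq]
  rw [Nat.cast_sum, Finset.mul_sum]

lemma posC : 0 < OPT (D 2) := by
  have h : ∀ i : Fin 7, 1 ≤ (∑ j, matC (blkC (Sum.inr i)) (blkC (Sum.inl j))) := by decide
  unfold OPT
  rw [Finset.lt_inf'_iff]
  intro i _
  rw [fcC i]
  have h1 : (1:ℝ) ≤ ((∑ j, matC (blkC (Sum.inr i)) (blkC (Sum.inl j)) : ℕ) : ℝ) := by
    exact_mod_cast h i
  linarith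

lemma optleC : OPT (D 2) ≤ 0.038866 * 4 := by
  have h := Finset.inf'_le (facCost (D 2)) (Finset.mem_univ (2 : Fin 7))
  rw [fcC 2, show (∑ j, matC (blkC (Sum.inr 2)) (blkC (Sum.inl j))) = 4 from by decide] at h
  exact_mod_cast h

lemma costC (q : Fin 7 → ℝ) : cost (D 2) q = q 0 * (0.038866 * 10) + q 1 * (0.038866 * 10) + q 2 * (0.038866 * 4) + q 3 * (0.038866 * 12) + q 4 * (0.038866 * 10) + q 5 * (0.038866 * 10) + q 6 * (0.038866 * 10) := by
  rw [show cost (D 2) q = ∑ i, q i * facCost (D 2) i from rfl, Fin.sum_univ_seven]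
  rw [fcC 0, fcC 1, fcC 2, fcC 3, fcC 4, fcC 5, fcC 6]
  rw [show (∑ j, matC (blkC (Sum.inr (0:Fin 7))) (blkC (Sum.inl j))) = 10 from by decide, show (∑ j, matC (blkC (Sum.inr (1:Fin 7))) (blkC (Sum.inl j))) = 10 from by decide, show (∑ j, matC (blkC (Sum.inr (2:Fin 7))) (blkC (Sum.inl j))) = 4 from by decide, show (∑ j, matC (blkC (Sum.inr (3:Fin 7))) (blkC (Sum.inl j))) = 12 from by decide, show (∑ j, matC (blkC (Sum.inr (4:Fin 7))) (blkC (Sum.inl j))) = 10 from by decide, show (∑ j, matC (blkC (Sum.inr (5:Fin 7))) (blkC (Sum.inl j))) = 10 from by decide, show (∑ j, matC (blkC (Sum.inr (6:Fin 7))) (blkC (Sum.inl j))) = 10 from by decide]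
  push_cast
  ring

lemma pmC : IsPseudometric dC := by
  have hsymm : ∀ u v, matC u v = matC v u := by decide
  have hdiag : ∀ v, matC v v = 0 := by decide
  have htri : ∀ a b c, matC a b ≤ matC a c + matC b c := by decide
  refine ⟨fun x y => ?_, fun x y => ?_, fun x => ?_, fun x y z => ?_⟩
  · simp only [dC, distC_eq]; positivity
  · simp only [dC, distC_eq]; rw [hsymm]
  · simp only [dC, distC_eq, hdiag]; norm_num
  · simp only [dC, distC_eq]
    have h := htri (blkC x) (blkC y) (blkC z)
    have h2 : ((matC (blkC x) (blkC y) : ℕ) : ℝ) ≤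
        ((matC (blkC x) (blkC z) : ℕ) : ℝ) + ((matC (blkC y) (blkC z) : ℕ) : ℝ) := by
      exact_mod_cast h
    linarith

lemma consC : Consistent dC sigmaStar := by
  have key : ∀ j a b : Fin 7, rkStar j a ≤ rkStar j b →
      matC (blkC (Sum.inr a)) (blkC (Sum.inl j)) ≤
        matC (blkC (Sum.inr b)) (blkC (Sum.inl j)) := by decide
  intro j a b h
  simp only [dC, distC_eq]
  have h2 : ((matC (blkC (Sum.inr a)) (blkC (Sum.inl j)) : ℕ) : ℝ) ≤
      ((matC (blkC (Sum.inr b)) (blkC (Sum.inl j)) : ℕ) : ℝ) :=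
    Nat.cast_le.mpr (key j a b h)
  linarith

def matD : Fin 4 → Fin 4 → ℕ := ![![0, 1, 1, 1], ![1, 0, 1, 1], ![1, 1, 0, 2], ![1, 1, 2, 0]]

instance : DecidableRel graphD.Adj :=
  fun a b => decidable_of_iff _ (SimpleGraph.fromRel_adj _ a b).symm

lemma distD_eq : ∀ u v, graphD.dist u v = matD u v :=
  dist_eq_mat (by decide) (by decide) (by decide) (by decide)

lemma fcD (i : Fin 7) : facCost (D 3) i =
    0.051820 * ((∑ j, matD (blkD (Sum.inr i)) (blkD (Sum.inl j)) : ℕ) : ℝ) := by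
  rw [show facCost (D 3) i = ∑ j, dD (Sum.inr i) (Sum.inl j) from rfl]
  simp only [dD, distD_eq]
  rw [Nat.cast_sum, Finset.mul_sum]

lemma posD : 0 < OPT (D 3) := by
  have h : ∀ i : Fin 7, 1 ≤ (∑ j, matD (blkD (Sum.inr i)) (blkD (Sum.inl j))) := by decide
  unfold OPT
  rw [Finset.lt_inf'_iff]
  intro i _
  rw [fcD i]
  have h1 : (1:ℝ) ≤ ((∑ j, matD (blkD (Sum.inr i)) (blkD (Sum.inl j)) : ℕ) : ℝ) := by
    exact_mod_cast h i
  linarith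

lemma optleD : OPT (D 3) ≤ 0.051820 * 4 := by
  have h := Finset.inf'_le (facCost (D 3)) (Finset.mem_univ (3 : Fin 7))
  rw [fcD 3, show (∑ j, matD (blkD (Sum.inr 3)) (blkD (Sum.inl j))) = 4 from by decide] at h
  exact_mod_cast h

lemma costD (q : Fin 7 → ℝ) : cost (D 3) q = q 0 * (0.051820 * 10) + q 1 * (0.051820 * 10) + q 2 * (0.051820 * 10) + q 3 * (0.051820 * 4) + q 4 * (0.051820 * 10) + q 5 * (0.051820 * 10) + q 6 * (0.051820 * 10) := by
  rw [show cost (D 3) q = ∑ i, q i * facCost (D 3) i from rfl, Fin.sum_univ_seven]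
  rw [fcD 0, fcD 1, fcD 2, fcD 3, fcD 4, fcD 5, fcD 6]
  rw [show (∑ j, matD (blkD (Sum.inr (0:Fin 7))) (blkD (Sum.inl j))) = 10 from by decide, show (∑ j, matD (blkD (Sum.inr (1:Fin 7))) (blkD (Sum.inl j))) = 10 from by decide, show (∑ j, matD (blkD (Sum.inr (2:Fin 7))) (blkD (Sum.inl j))) = 10 from by decide, show (∑ j, matD (blkD (Sum.inr (3:Fin 7))) (blkD (Sum.inl j))) = 4 from by decide, show (∑ j, matD (blkD (Sum.inr (4:Fin 7))) (blkD (Sum.inl j))) = 10 from by decide, show (∑ j, matD (blkD (Sum.inr (5:Fin 7))) (blkD (Sum.inl j))) = 10 from by decide, show (∑ j, matD (blkD (Sum.inr (6:Fin 7))) (blkD (Sum.inl j))) = 10 from by decide]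
  push_cast
  ring

lemma pmD : IsPseudometric dD := by
  have hsymm : ∀ u v, matD u v = matD v u := by decide
  have hdiag : ∀ v, matD v v = 0 := by decide
  have htri : ∀ a b c, matD a b ≤ matD a c + matD b c := by decide
  refine ⟨fun x y => ?_, fun x y => ?_, fun x => ?_, fun x y z => ?_⟩
  · simp only [dD, distD_eq]; positivity
  · simp only [dD, distD_eq]; rw [hsymm]
  · simp only [dD, distD_eq, hdiag]; norm_num
  · simp only [dD, distD_eq]
    have h := htri (blkD x) (blkD y) (blkD z)
    have h2 : ((matD (blkD x) (blkD y) : ℕ) : ℝ) ≤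
        ((matD (blkD x) (blkD z) : ℕ) : ℝ) + ((matD (blkD y) (blkD z) : ℕ) : ℝ) := by
      exact_mod_cast h
    linarith

lemma consD : Consistent dD sigmaStar := by
  have key : ∀ j a b : Fin 7, rkStar j a ≤ rkStar j b →
      matD (blkD (Sum.inr a)) (blkD (Sum.inl j)) ≤
        matD (blkD (Sum.inr b)) (blkD (Sum.inl j)) := by decide
  intro j a b h
  simp only [dD, distD_eq]
  have h2 : ((matD (blkD (Sum.inr a)) (blkD (Sum.inl j)) : ℕ) : ℝ) ≤
      ((matD (blkD (Sum.inr b)) (blkD (Sum.inl j)) : ℕ) : ℝ) :=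
    Nat.cast_le.mpr (key j a b h)
  linarith

def matE : Fin 8 → Fin 8 → ℕ := ![![0, 1, 2, 2, 3, 4, 3, 4], ![1, 0, 1, 1, 2, 3, 2, 3], ![2, 1, 0, 2, 1, 2, 3, 4], ![2, 1, 2, 0, 1, 2, 1, 2], ![3, 2, 1, 1, 0, 1, 2, 3], ![4, 3, 2, 2, 1, 0, 3, 4], ![3, 2, 3, 1, 2, 3, 0, 1], ![4, 3, 4, 2, 3, 4, 1, 0]]

instance : DecidableRel graphE.Adj :=
  fun a b => decidable_of_iff _ (SimpleGraph.fromRel_adj _ a b).symm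

lemma distE_eq : ∀ u v, graphE.dist u v = matE u v :=
  dist_eq_mat (by decide) (by decide) (by decide) (by decide)

lemma fcE (i : Fin 7) : facCost (D 4) i =
    0.013433 * ((∑ j, matE (blkE (Sum.inr i)) (blkE (Sum.inl j)) : ℕ) : ℝ) := by
  rw [show facCost (D 4) i = ∑ j, dE (Sum.inr i) (Sum.inl j) from rfl]
  simp only [dE, distE_eq]
  rw [Nat.cast_sum, Finset.mul_sum]

lemma posE : 0 < OPT (D 4) := by
  have h : ∀ i : Fin 7, 1 ≤ (∑ j, matE (blkE (Sum.inr i)) (blkE (Sum.inl j))) := by decide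
  unfold OPT
  rw [Finset.lt_inf'_iff]
  intro i _
  rw [fcE i]
  have h1 : (1:ℝ) ≤ ((∑ j, matE (blkE (Sum.inr i)) (blkE (Sum.inl j)) : ℕ) : ℝ) := by
    exact_mod_cast h i
  linarith

lemma optleE : OPT (D 4) ≤ 0.013433 * 7 := by
  have h := Finset.inf'_le (facCost (D 4)) (Finset.mem_univ (4 : Fin 7))
  rw [fcE 4, show (∑ j, matE (blkE (Sum.inr 4)) (blkE (Sum.inl j))) = 7 from by decide] at h
  exact_mod_cast h

lemma costE (q : Fin 7 → ℝ) : cost (D 4) q = q 0 * (0.013433 * 13) + q 1 * (0.013433 * 19) + q 2 * (0.013433 * 15) + q 3 * (0.013433 * 15) + q 4 * (0.013433 * 7) + q 5 * (0.013433 * 13) + q 6 * (0.013433 * 13) := by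
  rw [show cost (D 4) q = ∑ i, q i * facCost (D 4) i from rfl, Fin.sum_univ_seven]
  rw [fcE 0, fcE 1, fcE 2, fcE 3, fcE 4, fcE 5, fcE 6]
  rw [show (∑ j, matE (blkE (Sum.inr (0:Fin 7))) (blkE (Sum.inl j))) = 13 from by decide, show (∑ j, matE (blkE (Sum.inr (1:Fin 7))) (blkE (Sum.inl j))) = 19 from by decide, show (∑ j, matE (blkE (Sum.inr (2:Fin 7))) (blkE (Sum.inl j))) = 15 from by decide, show (∑ j, matE (blkE (Sum.inr (3:Fin 7))) (blkE (Sum.inl j))) = 15 from by decide, show (∑ j, matE (blkE (Sum.inr (4:Fin 7))) (blkE (Sum.inl j))) = 7 from by decide, show (∑ j, matE (blkE (Sum.inr (5:Fin 7))) (blkE (Sum.inl j))) = 13 from by decide, show (∑ j, matE (blkE (Sum.inr (6:Fin 7))) (blkE (Sum.inl j))) = 13 from by decide]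
  push_cast
  ring

lemma pmE : IsPseudometric dE := by
  have hsymm : ∀ u v, matE u v = matE v u := by decide
  have hdiag : ∀ v, matE v v = 0 := by decide
  have htri : ∀ a b c, matE a b ≤ matE a c + matE b c := by decide
  refine ⟨fun x y => ?_, fun x y => ?_, fun x => ?_, fun x y z => ?_⟩
  · simp only [dE, distE_eq]; positivity
  · simp only [dE, distE_eq]; rw [hsymm]
  · simp only [dE, distE_eq, hdiag]; norm_num
  · simp only [dE, distE_eq]
    have h := htri (blkE x) (blkE y) (blkE z)
    have h2 : ((matE (blkE x) (blkE y) : ℕ) : ℝ) ≤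
        ((matE (blkE x) (blkE z) : ℕ) : ℝ) + ((matE (blkE y) (blkE z) : ℕ) : ℝ) := by
      exact_mod_cast h
    linarith

lemma consE : Consistent dE sigmaStar := by
  have key : ∀ j a b : Fin 7, rkStar j a ≤ rkStar j b →
      matE (blkE (Sum.inr a)) (blkE (Sum.inl j)) ≤
        matE (blkE (Sum.inr b)) (blkE (Sum.inl j)) := by decide
  intro j a b h
  simp only [dE, distE_eq]
  have h2 : ((matE (blkE (Sum.inr a)) (blkE (Sum.inl j)) : ℕ) : ℝ) ≤
      ((matE (blkE (Sum.inr b)) (blkE (Sum.inl j)) : ℕ) : ℝ) :=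
    Nat.cast_le.mpr (key j a b h)
  linarith

def matF : Fin 9 → Fin 9 → ℕ := ![![0, 2, 2, 2, 1, 3, 3, 1, 3], ![2, 0, 2, 2, 1, 3, 1, 3, 1], ![2, 2, 0, 2, 3, 1, 3, 1, 1], ![2, 2, 2, 0, 1, 1, 1, 3, 3], ![1, 1, 3, 1, 0, 2, 2, 2, 2], ![3, 3, 1, 1, 2, 0, 2, 2, 2], ![3, 1, 3, 1, 2, 2, 0, 4, 2], ![1, 3, 1, 3, 2, 2, 4, 0, 2], ![3, 1, 1, 3, 2, 2, 2, 2, 0]]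

instance : DecidableRel graphF.Adj :=
  fun a b => decidable_of_iff _ (SimpleGraph.fromRel_adj _ a b).symm

lemma distF_eq : ∀ u v, graphF.dist u v = matF u v :=
  dist_eq_mat (by decide) (by decide) (by decide) (by decide)

lemma fcF (i : Fin 7) : facCost (D 5) i =
    0.019343 * ((∑ j, matF (blkF (Sum.inr i)) (blkF (Sum.inl j)) : ℕ) : ℝ) := by
  rw [show facCost (D 5) i = ∑ j, dF (Sum.inr i) (Sum.inl j) from rfl]
  simp only [dF, distF_eq]
  rw [Nat.cast_sum, Finset.mul_sum]

lemma posF : 0 < OPT (D 5) := by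
  have h : ∀ i : Fin 7, 1 ≤ (∑ j, matF (blkF (Sum.inr i)) (blkF (Sum.inl j))) := by decide
  unfold OPT
  rw [Finset.lt_inf'_iff]
  intro i _
  rw [fcF i]
  have h1 : (1:ℝ) ≤ ((∑ j, matF (blkF (Sum.inr i)) (blkF (Sum.inl j)) : ℕ) : ℝ) := by
    exact_mod_cast h i
  linarith

lemma optleF : OPT (D 5) ≤ 0.019343 * 7 := by
  have h := Finset.inf'_le (facCost (D 5)) (Finset.mem_univ (5 : Fin 7))
  rw [fcF 5, show (∑ j, matF (blkF (Sum.inr 5)) (blkF (Sum.inl j))) = 7 from by decide] at h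
  exact_mod_cast h

lemma costF (q : Fin 7 → ℝ) : cost (D 5) q = q 0 * (0.019343 * 13) + q 1 * (0.019343 * 13) + q 2 * (0.019343 * 15) + q 3 * (0.019343 * 15) + q 4 * (0.019343 * 15) + q 5 * (0.019343 * 7) + q 6 * (0.019343 * 15) := by
  rw [show cost (D 5) q = ∑ i, q i * facCost (D 5) i from rfl, Fin.sum_univ_seven]
  rw [fcF 0, fcF 1, fcF 2, fcF 3, fcF 4, fcF 5, fcF 6]
  rw [show (∑ j, matF (blkF (Sum.inr (0:Fin 7))) (blkF (Sum.inl j))) = 13 from by decide, show (∑ j, matF (blkF (Sum.inr (1:Fin 7))) (blkF (Sum.inl j))) = 13 from by decide, show (∑ j, matF (blkF (Sum.inr (2:Fin 7))) (blkF (Sum.inl j))) = 15 from by decide, show (∑ j, matF (blkF (Sum.inr (3:Fin 7))) (blkF (Sum.inl j))) = 15 from by decide, show (∑ j, matF (blkF (Sum.inr (4:Fin 7))) (blkF (Sum.inl j))) = 15 from by decide, show (∑ j, matF (blkF (Sum.inr (5:Fin 7))) (blkF (Sum.inl j))) = 7 from by decide, show (∑ j, matF (blkF (Sum.inr (6:Fin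 7))) (blkF (Sum.inl j))) = 15 from by decide]
  push_cast
  ring

lemma pmF : IsPseudometric dF := by
  have hsymm : ∀ u v, matF u v = matF v u := by decide
  have hdiag : ∀ v, matF v v = 0 := by decide
  have htri : ∀ a b c, matF a b ≤ matF a c + matF b c := by decide
  refine ⟨fun x y => ?_, fun x y => ?_, fun x => ?_, fun x y z => ?_⟩
  · simp only [dF, distF_eq]; positivity
  · simp only [dF, distF_eq]; rw [hsymm]
  · simp only [dF, distF_eq, hdiag]; norm_num
  · simp only [dF, distF_eq]
    have h := htri (blkF x) (blkF y) (blkF z)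
    have h2 : ((matF (blkF x) (blkF y) : ℕ) : ℝ) ≤
        ((matF (blkF x) (blkF z) : ℕ) : ℝ) + ((matF (blkF y) (blkF z) : ℕ) : ℝ) := by
      exact_mod_cast h
    linarith

lemma consF : Consistent dF sigmaStar := by
  have key : ∀ j a b : Fin 7, rkStar j a ≤ rkStar j b →
      matF (blkF (Sum.inr a)) (blkF (Sum.inl j)) ≤
        matF (blkF (Sum.inr b)) (blkF (Sum.inl j)) := by decide
  intro j a b h
  simp only [dF, distF_eq]
  have h2 : ((matF (blkF (Sum.inr a)) (blkF (Sum.inl j)) : ℕ) : ℝ) ≤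
      ((matF (blkF (Sum.inr b)) (blkF (Sum.inl j)) : ℕ) : ℝ) :=
    Nat.cast_le.mpr (key j a b h)
  linarith

def matG : Fin 9 → Fin 9 → ℕ := ![![0, 2, 2, 1, 3, 2, 3, 1, 1], ![2, 0, 2, 3, 1, 2, 1, 1, 3], ![2, 2, 0, 3, 3, 2, 1, 3, 1], ![1, 3, 3, 0, 2, 1, 2, 2, 2], ![3, 1, 3, 2, 0, 1, 2, 2, 4], ![2, 2, 2, 1, 1, 0, 1, 3, 3], ![3, 1, 1, 2, 2, 1, 0, 2, 2], ![1, 1, 3, 2, 2, 3, 2, 0, 2], ![1, 3, 1, 2, 4, 3, 2, 2, 0]]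

instance : DecidableRel graphG.Adj :=
  fun a b => decidable_of_iff _ (SimpleGraph.fromRel_adj _ a b).symm

lemma distG_eq : ∀ u v, graphG.dist u v = matG u v :=
  dist_eq_mat (by decide) (by decide) (by decide) (by decide)

lemma fcG (i : Fin 7) : facCost (D 6) i =
    0.025791 * ((∑ j, matG (blkG (Sum.inr i)) (blkG (Sum.inl j)) : ℕ) : ℝ) := by
  rw [show facCost (D 6) i = ∑ j, dG (Sum.inr i) (Sum.inl j) from rfl]
  simp only [dG, distG_eq]
  rw [Nat.cast_sum, Finset.mul_sum]

lemma posG : 0 < OPT (D 6) := by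
  have h : ∀ i : Fin 7, 1 ≤ (∑ j, matG (blkG (Sum.inr i)) (blkG (Sum.inl j))) := by decide
  unfold OPT
  rw [Finset.lt_inf'_iff]
  intro i _
  rw [fcG i]
  have h1 : (1:ℝ) ≤ ((∑ j, matG (blkG (Sum.inr i)) (blkG (Sum.inl j)) : ℕ) : ℝ) := by
    exact_mod_cast h i
  linarith

lemma optleG : OPT (D 6) ≤ 0.025791 * 7 := by
  have h := Finset.inf'_le (facCost (D 6)) (Finset.mem_univ (6 : Fin 7))
  rw [fcG 6, show (∑ j, matG (blkG (Sum.inr 6)) (blkG (Sum.inl j))) = 7 from by decide] at h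
  exact_mod_cast h

lemma costG (q : Fin 7 → ℝ) : cost (D 6) q = q 0 * (0.025791 * 13) + q 1 * (0.025791 * 13) + q 2 * (0.025791 * 15) + q 3 * (0.025791 * 15) + q 4 * (0.025791 * 15) + q 5 * (0.025791 * 13) + q 6 * (0.025791 * 7) := by
  rw [show cost (D 6) q = ∑ i, q i * facCost (D 6) i from rfl, Fin.sum_univ_seven]
  rw [fcG 0, fcG 1, fcG 2, fcG 3, fcG 4, fcG 5, fcG 6]
  rw [show (∑ j, matG (blkG (Sum.inr (0:Fin 7))) (blkG (Sum.inl j))) = 13 from by decide, show (∑ j, matG (blkG (Sum.inr (1:Fin 7))) (blkG (Sum.inl j))) = 13 from by decide, show (∑ j, matG (blkG (Sum.inr (2:Fin 7))) (blkG (Sum.inl j))) = 15 from by decide, show (∑ j, matG (blkG (Sum.inr (3:Fin 7))) (blkG (Sum.inl j))) = 15 from by decide, show (∑ j, matG (blkG (Sum.inr (4:Fin 7))) (blkG (Sum.inl j))) = 15 from by decide, show (∑ j, matG (blkG (Sum.inr (5:Fin 7))) (blkG (Sum.inl j))) = 13 from by decide, show (∑ j, matG (blkG (Sum.inr (6:Fin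 7))) (blkG (Sum.inl j))) = 7 from by decide]
  push_cast
  ring

lemma pmG : IsPseudometric dG := by
  have hsymm : ∀ u v, matG u v = matG v u := by decide
  have hdiag : ∀ v, matG v v = 0 := by decide
  have htri : ∀ a b c, matG a b ≤ matG a c + matG b c := by decide
  refine ⟨fun x y => ?_, fun x y => ?_, fun x => ?_, fun x y z => ?_⟩
  · simp only [dG, distG_eq]; positivity
  · simp only [dG, distG_eq]; rw [hsymm]
  · simp only [dG, distG_eq, hdiag]; norm_num
  · simp only [dG, distG_eq]
    have h := htri (blkG x) (blkG y) (blkG z)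
    have h2 : ((matG (blkG x) (blkG y) : ℕ) : ℝ) ≤
        ((matG (blkG x) (blkG z) : ℕ) : ℝ) + ((matG (blkG y) (blkG z) : ℕ) : ℝ) := by
      exact_mod_cast h
    linarith

lemma consG : Consistent dG sigmaStar := by
  have key : ∀ j a b : Fin 7, rkStar j a ≤ rkStar j b →
      matG (blkG (Sum.inr a)) (blkG (Sum.inl j)) ≤
        matG (blkG (Sum.inr b)) (blkG (Sum.inl j)) := by decide
  intro j a b h
  simp only [dG, distG_eq]
  have h2 : ((matG (blkG (Sum.inr a)) (blkG (Sum.inl j)) : ℕ) : ℝ) ≤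
      ((matG (blkG (Sum.inr b)) (blkG (Sum.inl j)) : ℕ) : ℝ) :=
    Nat.cast_le.mpr (key j a b h)
  linarith


private lemma main_ex (q : Fin 7 → ℝ) (hq0 : ∀ i, 0 ≤ q i) (hq1 : ∑ i, q i = 1) :
    ∃ o : Fin 7, 2.063 * OPT (D o) ≤ cost (D o) q := by
  by_contra hcon
  push_neg at hcon
  have hq1' : q 0 + q 1 + q 2 + q 3 + q 4 + q 5 + q 6 = 1 := by
    rw [← hq1, Fin.sum_univ_seven]
  linarith [hq1', hcon 0, optleA, costA q, hcon 1, optleB, costB q, hcon 2, optleC, costC q, hcon 3, optleD, costD q, hcon 4, optleE, costE q, hcon 5, optleF, costF q, hcon 6, optleG, costG q, hq0 0, hq0 1, hq0 2, hq0 3, hq0 4, hq0 5, hq0 6, hq1]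

/-- explicit lower bound via the seven witness metrics: for every
probability distribution `q` on the facilities there is a facility `o` such that,
in the witness metric `d^o`, `cost_{d^o}(q) ≥ 2.063 · OPT(d^o)` and `OPT(d^o) > 0`;
hence there is a pseudometric `d` consistent with `σ*` with `OPT d > 0` and
`cost d q ≥ 2.063 · OPT d`, so the best achievable ratio is at least 2.063. -/
theorem explicit_lower_bound (q : Fin 7 → ℝ)
    (hq0 : ∀ i, 0 ≤ q i) (hq1 : ∑ i, q i = 1) :
    (∃ o : Fin 7, 2.063 * OPT (D o) ≤ cost (D o) q ∧ 0 < OPT (D o)) ∧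
      ∃ d : Pt → Pt → ℝ, IsPseudometric d ∧ Consistent d sigmaStar ∧
        0 < OPT d ∧ 2.063 * OPT d ≤ cost d q := by
  obtain ⟨o, ho⟩ := main_ex q hq0 hq1
  have hside : 0 < OPT (D o) ∧ IsPseudometric (D o) ∧ Consistent (D o) sigmaStar := by
    fin_cases o
    · exact ⟨posA, pmA, consA⟩
    · exact ⟨posB, pmB, consB⟩
    · exact ⟨posC, pmC, consC⟩
    · exact ⟨posD, pmD, consD⟩
    · exact ⟨posE, pmE, consE⟩
    · exact ⟨posF, pmF, consF⟩
    · exact ⟨posG, pmG, consG⟩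
  exact ⟨⟨o, ho, hside.1⟩, D o, hside.2.1, hside.2.2, hside.1, ho⟩
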